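/- Work in ℝ^8 with the standard inner product ⟨·,·⟩ and standard basis e_1,…,e_8. Let V be the 27-point set consisting of a_i = 2e_i + 2e_7 and b_i = 2e_i + 2e_8 for 1 ≤ i ≤ 6, and c_{ij} = (e_1 + ⋯ + e_8) − 2e_i − 2e_j for 1 ≤ i < j ≤ 6 (the vertex set of the polytope 2_21). Let Φ be the E_6 root system Φ = {e_i − e_j : 1 ≤ i, j ≤ 8, i ≠ j, |{i,j} ∩ {7,8}| ≠ 1} ∪ {(1/2)(Σ_{i∈I} e_i − Σ_{j∈{1,…,8}∖I} e_j) : I ⊆ {1,…,8}, |I| = 4, |I ∩ {7,8}| = 1}, and for α ∈ Φ let r_α(x) = x − (2⟨x,α⟩/⟨α,α⟩)·α. Let M ⊆ V. Then the following are equivalent: (a) for all u, v ∈ M with u ≠ v there exists α ∈ Φ with ⟨u,α⟩·⟨v,α⟩ < 0, r_α(u) ∈ M and r_α(v) ∈ M; (b) for every A ∈ V, the number of unordered pairs {B, B′} of distinct points of V with ⟨A,B⟩ = 0, ⟨A,B′⟩ = 0, ⟨B,B′⟩ = 0, B ∈ M and B′ ∈ M is not equal to 1. -/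

import Mathlib

set_option maxRecDepth 10000

/-- The `i`-th standard basis vector of `ℝ^8`. -/
noncomputable def e8 (i : Fin 8) : EuclideanSpace ℝ (Fin 8) :=
  EuclideanSpace.single i 1


/-- The 27-point vertex set of the polytope `2_21`:
`a_i = 2e_i + 2e_7`, `b_i = 2e_i + 2e_8` for `1 ≤ i ≤ 6`, and
`c_{ij} = (e_1 + ⋯ + e_8) - 2e_i - 2e_j` for `1 ≤ i < j ≤ 6` (0-indexed here). -/
noncomputable def V221 : Set (EuclideanSpace ℝ (Fin 8)) :=
  {v | (∃ i : Fin 8, i.val < 6 ∧ v = (2 : ℝ) • e8 i + (2 : ℝ) • e8 6)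
     ∨ (∃ i : Fin 8, i.val < 6 ∧ v = (2 : ℝ) • e8 i + (2 : ℝ) • e8 7)
     ∨ (∃ i j : Fin 8, i.val < 6 ∧ j.val < 6 ∧ i < j ∧
          v = (∑ k, e8 k) - (2 : ℝ) • e8 i - (2 : ℝ) • e8 j)}

/-- The root system of type `E_6`, realised inside `ℝ^8`. -/
noncomputable def PhiE6 : Set (EuclideanSpace ℝ (Fin 8)) :=
  {α | (∃ i j : Fin 8, i ≠ j ∧ (({i, j} : Finset (Fin 8)) ∩ {6, 7}).card ≠ 1 ∧
          α = e8 i - e8 j)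
     ∨ (∃ I : Finset (Fin 8), I.card = 4 ∧ (I ∩ ({6, 7} : Finset (Fin 8))).card = 1 ∧
          α = (1 / 2 : ℝ) • (∑ i ∈ I, e8 i - ∑ j ∈ Iᶜ, e8 j))}

/-- The reflection in the hyperplane orthogonal to `α`. -/
noncomputable def reflVec (α x : EuclideanSpace ℝ (Fin 8)) :
    EuclideanSpace ℝ (Fin 8) :=
  x - (2 * (inner ℝ x α : ℝ) / (inner ℝ α α : ℝ)) • α

abbrev I27 := (Fin 6 ⊕ Fin 6) ⊕ {p : Fin 6 × Fin 6 // p.1 < p.2}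

def coords : I27 → Fin 8 → ℤ
  | .inl (.inl i), k => (if k.val = i.val then 2 else 0) + (if k.val = 6 then 2 else 0)
  | .inl (.inr i), k => (if k.val = i.val then 2 else 0) + (if k.val = 7 then 2 else 0)
  | .inr p, k => 1 - (if k.val = p.val.1.val then 2 else 0) - (if k.val = p.val.2.val then 2 else 0)

noncomputable def FZ (f : Fin 8 → ℤ) : EuclideanSpace ℝ (Fin 8) := ∑ k, (f k : ℝ) • e8 k

lemma inner_FZ (f g : Fin 8 → ℤ) : (inner ℝ (FZ f) (FZ g) : ℝ) = ((∑ k, f k * g k : ℤ) : ℝ) := by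
  simp [FZ, inner_sum, sum_inner, real_inner_smul_left, real_inner_smul_right, e8,
    EuclideanSpace.inner_single_left, EuclideanSpace.inner_single_right,
    EuclideanSpace.single_apply, mul_comm]


lemma inner_FZ_e8 (f : Fin 8 → ℤ) (i : Fin 8) : (inner ℝ (FZ f) (e8 i) : ℝ) = (f i : ℝ) := by
  simp [FZ, sum_inner, real_inner_smul_left, e8, EuclideanSpace.inner_single_left,
    EuclideanSpace.single_apply, Finset.sum_ite_eq]

lemma FZ_inj {f g : Fin 8 → ℤ} (h : FZ f = FZ g) : f = g := by
  funext i
  have := congrArg (fun v => (inner ℝ v (e8 i) : ℝ)) h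
  simp only [inner_FZ_e8] at this
  exact_mod_cast this

lemma e8_eq_FZ (i : Fin 8) : e8 i = FZ (fun k => if k = i then 1 else 0) := by
  simp [FZ, apply_ite (fun z : ℤ => (z : ℝ)), ite_smul, Finset.sum_ite_eq']

lemma FZ_add (f g : Fin 8 → ℤ) : FZ (f + g) = FZ f + FZ g := by
  simp [FZ, add_smul, Finset.sum_add_distrib, Int.cast_add, Pi.add_apply]

lemma FZ_smul (c : ℤ) (f : Fin 8 → ℤ) : (c : ℝ) • FZ f = FZ (fun k => c * f k) := by
  simp [FZ, Finset.smul_sum, smul_smul, Int.cast_mul]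

lemma FZ_sub (f g : Fin 8 → ℤ) : FZ f - FZ g = FZ (fun k => f k - g k) := by
  simp [FZ, sub_smul, Finset.sum_sub_distrib, Int.cast_sub]

lemma sum_e8_eq_FZ (s : Finset (Fin 8)) : (∑ i ∈ s, e8 i) = FZ (fun k => if k ∈ s then 1 else 0) := by
  simp [FZ, apply_ite (fun z : ℤ => (z : ℝ)), ite_smul, Finset.sum_ite_mem, Finset.univ_inter]

noncomputable def enc (p : I27) : EuclideanSpace ℝ (Fin 8) := FZ (coords p)

def gram (p q : I27) : ℤ := ∑ k, coords p k * coords q k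

lemma inner_enc (p q : I27) : (inner ℝ (enc p) (enc q) : ℝ) = (gram p q : ℝ) := by
  rw [enc, enc, inner_FZ]; rfl

-- D1
lemma D1a : ∀ p q : I27, gram p q = 0 ∨ gram p q = 4 ∨ gram p q = 8 := by decide
lemma D1b : ∀ p : I27, gram p p = 8 := by decide
lemma D1c : ∀ p q : I27, gram p q = 8 → p = q := by decide

-- common orthogonal vertex exists
lemma D4 : ∀ p q : I27, gram p q = 0 → ∃ r : I27, gram p r = 0 ∧ gram q r = 0 := by decide

-- antipode uniqueness
set_option synthInstance.maxSize 5000 in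
set_option synthInstance.maxHeartbeats 2000000 in
lemma D5 : ∀ a u : I27, gram a u = 0 → ∀ v : I27, gram a v = 0 → gram u v = 0 →
    ∀ x : I27, gram a x = 0 → gram u x = 0 → x = v := by decide

set_option synthInstance.maxSize 5000 in
set_option synthInstance.maxHeartbeats 2000000 in
set_option maxHeartbeats 4000000 in
lemma D2 : ∀ p q : I27, gram p q = 4 →
    ((∃ i j : Fin 8, i ≠ j ∧ (({i, j} : Finset (Fin 8)) ∩ {6, 7}).card ≠ 1 ∧
        ∀ k, coords p k - coords q k =
          2 * ((if k = i then 1 else 0) - (if k = j then 1 else 0))) ∨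
     (∃ I : Finset (Fin 8), I.card = 4 ∧ (I ∩ ({6, 7} : Finset (Fin 8))).card = 1 ∧
        ∀ k, coords p k - coords q k = (if k ∈ I then 1 else -1))) := by decide

-- pairing values with type-1 roots
lemma D3a : ∀ p : I27, ∀ i j : Fin 8,
    coords p i - coords p j = -2 ∨ coords p i - coords p j = 0 ∨ coords p i - coords p j = 2 := by decide

set_option synthInstance.maxSize 5000 in
set_option synthInstance.maxHeartbeats 2000000 in
-- pairing values with type-2 roots
lemma D3b : ∀ I : Finset (Fin 8), I.card = 4 → ∀ p : I27,
    (∑ k, coords p k * (if k ∈ I then 1 else -1)) = -4 ∨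
    (∑ k, coords p k * (if k ∈ I then 1 else -1)) = 0 ∨
    (∑ k, coords p k * (if k ∈ I then 1 else -1)) = 4 := by decide

lemma D6a : ∀ i j : Fin 8, i ≠ j →
    (∑ k, ((if k = i then (1:ℤ) else 0) - (if k = j then 1 else 0)) *
          ((if k = i then 1 else 0) - (if k = j then 1 else 0))) = 2 := by decide

lemma D6b : ∀ I : Finset (Fin 8),
    (∑ k, (if k ∈ I then (1:ℤ) else -1) * (if k ∈ I then 1 else -1)) = 8 := by decide

lemma two_smul_e8 (i : Fin 8) : (2:ℝ) • e8 i = FZ (fun k => if k = i then 2 else 0) := by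
  rw [e8_eq_FZ, show ((2:ℝ)) = ((2:ℤ):ℝ) by norm_cast, FZ_smul]
  congr 1; funext k; simp [mul_ite]

lemma V221_eq : V221 = Set.range enc := by
  ext v
  simp only [V221, Set.mem_setOf_eq]
  constructor
  · rintro (⟨i, hi, rfl⟩ | ⟨i, hi, rfl⟩ | ⟨i, j, hi, hj, hij, rfl⟩)
    · exact ⟨.inl (.inl ⟨i.val, hi⟩), by
        rw [enc, two_smul_e8, two_smul_e8, ← FZ_add]
        exact congrArg FZ (funext fun k => by simp [coords, Fin.ext_iff, show ((6:Fin 8):ℕ)=6 from rfl, show ((7:Fin 8):ℕ)=7 from rfl])⟩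
    · exact ⟨.inl (.inr ⟨i.val, hi⟩), by
        rw [enc, two_smul_e8, two_smul_e8, ← FZ_add]
        exact congrArg FZ (funext fun k => by simp [coords, Fin.ext_iff, show ((6:Fin 8):ℕ)=6 from rfl, show ((7:Fin 8):ℕ)=7 from rfl])⟩
    · refine ⟨.inr ⟨(⟨i.val, hi⟩, ⟨j.val, hj⟩), hij⟩, ?_⟩
      rw [enc, two_smul_e8, two_smul_e8, show (Finset.univ : Finset (Fin 8)) = Finset.univ from rfl,
        sum_e8_eq_FZ, FZ_sub, FZ_sub]
      exact congrArg FZ (funext fun k => by simp [coords, Fin.ext_iff, show ((6:Fin 8):ℕ)=6 from rfl, show ((7:Fin 8):ℕ)=7 from rfl])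
  · rintro ⟨p, rfl⟩
    rcases p with (i | i) | ⟨⟨i, j⟩, hij⟩
    · refine Or.inl ⟨⟨i.val, by omega⟩, by simpa using i.isLt, ?_⟩
      rw [enc, two_smul_e8, two_smul_e8, ← FZ_add]
      exact congrArg FZ (funext fun k => by simp [coords, Fin.ext_iff, show ((6:Fin 8):ℕ)=6 from rfl, show ((7:Fin 8):ℕ)=7 from rfl])
    · refine Or.inr (Or.inl ⟨⟨i.val, by omega⟩, by simpa using i.isLt, ?_⟩)
      rw [enc, two_smul_e8, two_smul_e8, ← FZ_add]
      exact congrArg FZ (funext fun k => by simp [coords, Fin.ext_iff, show ((6:Fin 8):ℕ)=6 from rfl, show ((7:Fin 8):ℕ)=7 from rfl])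
    · refine Or.inr (Or.inr ⟨⟨i.val, by omega⟩, ⟨j.val, by omega⟩, by simpa using i.isLt,
        by simpa using j.isLt, by exact Fin.mk_lt_mk.mpr hij, ?_⟩)
      rw [enc, two_smul_e8, two_smul_e8, sum_e8_eq_FZ, FZ_sub, FZ_sub]
      exact congrArg FZ (funext fun k => by simp [coords, Fin.ext_iff, show ((6:Fin 8):ℕ)=6 from rfl, show ((7:Fin 8):ℕ)=7 from rfl])

lemma Dsym : ∀ p q : I27, gram p q = gram q p := by
  intro p q
  unfold gram
  exact Finset.sum_congr rfl fun k _ => mul_comm _ _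

lemma D7a : ∀ p : I27, ∀ i j : Fin 8,
    (∑ k, coords p k * ((if k = i then 1 else 0) - (if k = j then 1 else 0)))
      = coords p i - coords p j := by
  intro p i j
  simp [mul_sub, mul_ite, Finset.sum_sub_distrib, Finset.sum_ite_eq']

lemma sub_e8_eq (i j : Fin 8) :
    e8 i - e8 j = FZ (fun k => (if k = i then 1 else 0) - (if k = j then 1 else 0)) := by
  rw [e8_eq_FZ i, e8_eq_FZ j, FZ_sub]

lemma half_root_eq (I : Finset (Fin 8)) :
    (∑ i ∈ I, e8 i - ∑ j ∈ Iᶜ, e8 j) = FZ (fun k => if k ∈ I then 1 else -1) := by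
  rw [sum_e8_eq_FZ, sum_e8_eq_FZ, FZ_sub]
  exact congrArg FZ (funext fun k => by by_cases h : k ∈ I <;> simp [h])

lemma phi_norm {α : EuclideanSpace ℝ (Fin 8)} (hα : α ∈ PhiE6) :
    (inner ℝ α α : ℝ) = 2 := by
  rcases hα with ⟨i, j, hij, -, rfl⟩ | ⟨I, hI4, -, rfl⟩
  · rw [sub_e8_eq, inner_FZ, D6a i j hij]; norm_num
  · rw [half_root_eq, real_inner_smul_left, real_inner_smul_right, inner_FZ, D6b I]
    norm_num

lemma phi_pairing {α : EuclideanSpace ℝ (Fin 8)} (hα : α ∈ PhiE6) (p : I27) :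
    (inner ℝ (enc p) α : ℝ) = -2 ∨ (inner ℝ (enc p) α : ℝ) = 0 ∨ (inner ℝ (enc p) α : ℝ) = 2 := by
  rcases hα with ⟨i, j, hij, -, rfl⟩ | ⟨I, hI4, -, rfl⟩
  · rw [sub_e8_eq, enc, inner_FZ, D7a p i j]
    rcases D3a p i j with h | h | h <;> rw [h] <;> norm_num
  · rw [half_root_eq, real_inner_smul_right, enc, inner_FZ]
    rcases D3b I hI4 p with h | h | h <;> rw [h] <;> norm_num

lemma root_of_adj {p q : I27} (h4 : gram p q = 4) :
    (1 / 2 : ℝ) • (enc p - enc q) ∈ PhiE6 := by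
  rcases D2 p q h4 with ⟨i, j, hij, hcard, h⟩ | ⟨I, hI4, hcard, h⟩
  · refine Or.inl ⟨i, j, hij, hcard, ?_⟩
    rw [sub_e8_eq, enc, enc, FZ_sub]
    rw [show ((1/2 : ℝ)) = (((1:ℤ) : ℝ) / ((2:ℤ) : ℝ)) by norm_num]
    have h2 : FZ (fun k => coords p k - coords q k)
        = ((2:ℤ) : ℝ) • FZ (fun k => (if k = i then 1 else 0) - (if k = j then 1 else 0)) := by
      rw [FZ_smul]
      exact congrArg FZ (funext fun k => by rw [h k])
    rw [h2, smul_smul]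
    norm_num
  · refine Or.inr ⟨I, hI4, hcard, ?_⟩
    rw [half_root_eq, enc, enc, FZ_sub]
    exact congrArg _ (congrArg FZ (funext fun k => by rw [h k]))

lemma refl_plus {α u : EuclideanSpace ℝ (Fin 8)} (hαα : (inner ℝ α α : ℝ) = 2)
    (hu : (inner ℝ u α : ℝ) = 2) : reflVec α u = u - (2:ℝ) • α := by
  rw [reflVec, hαα, hu]; norm_num

lemma refl_minus {α u : EuclideanSpace ℝ (Fin 8)} (hαα : (inner ℝ α α : ℝ) = 2)
    (hu : (inner ℝ u α : ℝ) = -2) : reflVec α u = u + (2:ℝ) • α := by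
  rw [reflVec, hαα, hu, show ((2 * (-2) / 2 : ℝ)) = -2 by norm_num, neg_smul, sub_neg_eq_add]

lemma inner_self_eight {x : EuclideanSpace ℝ (Fin 8)} (hx : x ∈ V221) :
    (inner ℝ x x : ℝ) = 8 := by
  rw [V221_eq] at hx
  obtain ⟨p, rfl⟩ := hx
  rw [inner_enc, D1b p]; norm_num

lemma key_lemma (M : Set (EuclideanSpace ℝ (Fin 8))) (hM : M ⊆ V221) (a : I27)
    (B B' α : EuclideanSpace ℝ (Fin 8))
    (hBM : B ∈ M) (hB'M : B' ∈ M)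
    (hBB' : (inner ℝ B B' : ℝ) = 0)
    (hAB : (inner ℝ (enc a) B : ℝ) = 0) (hAB' : (inner ℝ (enc a) B' : ℝ) = 0)
    (hαα : (inner ℝ α α : ℝ) = 2)
    (hBα : (inner ℝ B α : ℝ) = 2) (hB'α : (inner ℝ B' α : ℝ) = -2)
    (hxM : reflVec α B ∈ M) (hyM : reflVec α B' ∈ M) :
    ∃ x y : EuclideanSpace ℝ (Fin 8), x ≠ y ∧ x ∈ V221 ∧ y ∈ V221 ∧
      (inner ℝ (enc a) x : ℝ) = 0 ∧ (inner ℝ (enc a) y : ℝ) = 0 ∧ (inner ℝ x y : ℝ) = 0 ∧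
      x ∈ M ∧ y ∈ M ∧ x ∉ ({B, B'} : Set (EuclideanSpace ℝ (Fin 8))) := by
  have hBV : B ∈ V221 := hM hBM
  have hB'V : B' ∈ V221 := hM hB'M
  set x := reflVec α B with hxdef
  set y := reflVec α B' with hydef
  have hxV : x ∈ V221 := hM hxM
  have hyV : y ∈ V221 := hM hyM
  have hx : x = B - (2:ℝ) • α := refl_plus hαα hBα
  have hy : y = B' + (2:ℝ) • α := refl_minus hαα hB'α
  have hαB : (inner ℝ α B : ℝ) = 2 := by rw [real_inner_comm]; exact hBα
  have hαB' : (inner ℝ α B' : ℝ) = -2 := by rw [real_inner_comm]; exact hB'α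
  have hB'B : (inner ℝ B' B : ℝ) = 0 := by rw [real_inner_comm]; exact hBB'
  have hBB8 : (inner ℝ B B : ℝ) = 8 := inner_self_eight hBV
  have hB'B'8 : (inner ℝ B' B' : ℝ) = 8 := inner_self_eight hB'V
  have hxx8 : (inner ℝ x x : ℝ) = 8 := inner_self_eight hxV
  -- inner x y = 0
  have hxy : (inner ℝ x y : ℝ) = 0 := by
    rw [hx, hy]
    simp only [inner_sub_left, inner_add_right, real_inner_smul_left, real_inner_smul_right,
      hBB', hBα, hαB', hαα]
    norm_num
  have hxny : x ≠ y := by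
    intro h
    rw [← h] at hxy
    rw [hxy] at hxx8
    norm_num at hxx8
  -- sum
  have hsum : x + y = B + B' := by rw [hx, hy]; abel
  have hAx_plus : (inner ℝ (enc a) x : ℝ) + (inner ℝ (enc a) y : ℝ) = 0 := by
    have := congrArg (fun z => (inner ℝ (enc a) z : ℝ)) hsum
    simp only [inner_add_right] at this
    rw [this, hAB, hAB']; norm_num
  -- values in {0,4,8}
  have hval : ∀ z ∈ V221, (inner ℝ (enc a) z : ℝ) = 0 ∨ (inner ℝ (enc a) z : ℝ) = 4 ∨
      (inner ℝ (enc a) z : ℝ) = 8 := by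
    intro z hz
    rw [V221_eq] at hz
    obtain ⟨r, rfl⟩ := hz
    rw [inner_enc]
    rcases D1a a r with h | h | h <;> rw [h] <;> norm_num
  have hAx : (inner ℝ (enc a) x : ℝ) = 0 := by
    rcases hval x hxV with h | h | h <;> rcases hval y hyV with h' | h' | h' <;> linarith
  have hAy : (inner ℝ (enc a) y : ℝ) = 0 := by linarith
  -- x not in {B, B'}
  have hxB : (inner ℝ x B : ℝ) = 4 := by
    rw [hx]
    simp only [inner_sub_left, real_inner_smul_left, hBB8, hαB]
    norm_num
  have hxB' : (inner ℝ x B' : ℝ) = 4 := by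
    rw [hx]
    simp only [inner_sub_left, real_inner_smul_left, hBB', hαB']
    norm_num
  refine ⟨x, y, hxny, hxV, hyV, hAx, hAy, hxy, hxM, hyM, ?_⟩
  intro hmem
  rcases hmem with h | h
  · rw [h] at hxB; rw [hxB] at hBB8; norm_num at hBB8
  · rw [h] at hxB'; rw [hxB'] at hB'B'8; norm_num at hB'B'8

lemma mem_V221_enc (p : I27) : enc p ∈ V221 := by rw [V221_eq]; exact ⟨p, rfl⟩

/-- A subset `M` of the vertices of `2_21` satisfies the strong exchange
property for the `E_6` roots iff for every vertex `A`, not exactly one antipodal pair of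
the cross-polytope facet `◇(A)` (pairs of vertices orthogonal to `A` and to each other)
lies in `M`. -/
theorem E6_strong_exchange_iff_equations
    (M : Set (EuclideanSpace ℝ (Fin 8))) (hM : M ⊆ V221) :
    (∀ u ∈ M, ∀ v ∈ M, u ≠ v → ∃ α ∈ PhiE6,
      (inner ℝ u α : ℝ) * (inner ℝ v α : ℝ) < 0 ∧ reflVec α u ∈ M ∧ reflVec α v ∈ M)
    ↔
    (∀ A ∈ V221,
      {s : Set (EuclideanSpace ℝ (Fin 8)) | ∃ B B', B ≠ B' ∧ s = {B, B'} ∧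
        B ∈ V221 ∧ B' ∈ V221 ∧ (inner ℝ A B : ℝ) = 0 ∧ (inner ℝ A B' : ℝ) = 0 ∧
        (inner ℝ B B' : ℝ) = 0 ∧ B ∈ M ∧ B' ∈ M}.ncard ≠ 1) := by
  constructor
  · -- (a) → (b)
    intro ha A hA hcard
    rw [V221_eq] at hA
    obtain ⟨a, rfl⟩ := hA
    rw [Set.ncard_eq_one] at hcard
    obtain ⟨s, hs⟩ := hcard
    have hsS : s ∈ {s : Set (EuclideanSpace ℝ (Fin 8)) | ∃ B B', B ≠ B' ∧ s = {B, B'} ∧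
        B ∈ V221 ∧ B' ∈ V221 ∧ (inner ℝ (enc a) B : ℝ) = 0 ∧ (inner ℝ (enc a) B' : ℝ) = 0 ∧
        (inner ℝ B B' : ℝ) = 0 ∧ B ∈ M ∧ B' ∈ M} := by rw [hs]; exact rfl
    obtain ⟨B, B', hBB'ne, hseq, hBV, hB'V, hAB, hAB', hBB'i, hBM, hB'M⟩ := hsS
    obtain ⟨α, hαΦ, hprod, hxM, hyM⟩ := ha B hBM B' hB'M hBB'ne
    have hαα := phi_norm hαΦ
    obtain ⟨pb, hpb⟩ := (V221_eq ▸ hBV : B ∈ Set.range enc)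
    obtain ⟨pb', hpb'⟩ := (V221_eq ▸ hB'V : B' ∈ Set.range enc)
    have hvB := phi_pairing hαΦ pb
    have hvB' := phi_pairing hαΦ pb'
    rw [hpb] at hvB
    rw [hpb'] at hvB'
    -- sign analysis
    have hcase : ((inner ℝ B α : ℝ) = 2 ∧ (inner ℝ B' α : ℝ) = -2) ∨
        ((inner ℝ B α : ℝ) = -2 ∧ (inner ℝ B' α : ℝ) = 2) := by
      rcases hvB with h1 | h1 | h1 <;> rcases hvB' with h2 | h2 | h2 <;>
        first
          | exact Or.inl ⟨h1, h2⟩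
          | exact Or.inr ⟨h1, h2⟩
          | (rw [h1, h2] at hprod; norm_num at hprod)
    rcases hcase with ⟨h1, h2⟩ | ⟨h1, h2⟩
    · obtain ⟨x, y, hxny, hxV, hyV, hAx, hAy, hxyi, hxM', hyM', hxnot⟩ :=
        key_lemma M hM a B B' α hBM hB'M hBB'i hAB hAB' hαα h1 h2 hxM hyM
      have htS : ({x, y} : Set (EuclideanSpace ℝ (Fin 8))) ∈
          {s : Set (EuclideanSpace ℝ (Fin 8)) | ∃ B B', B ≠ B' ∧ s = {B, B'} ∧
            B ∈ V221 ∧ B' ∈ V221 ∧ (inner ℝ (enc a) B : ℝ) = 0 ∧ (inner ℝ (enc a) B' : ℝ) = 0 ∧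
            (inner ℝ B B' : ℝ) = 0 ∧ B ∈ M ∧ B' ∈ M} :=
        ⟨x, y, hxny, rfl, hxV, hyV, hAx, hAy, hxyi, hxM', hyM'⟩
      rw [hs] at htS
      have : x ∈ ({B, B'} : Set (EuclideanSpace ℝ (Fin 8))) := by
        rw [← hseq, ← htS]; exact Set.mem_insert x {y}
      exact hxnot this
    · have hB'B : (inner ℝ B' B : ℝ) = 0 := by rw [real_inner_comm]; exact hBB'i
      obtain ⟨x, y, hxny, hxV, hyV, hAx, hAy, hxyi, hxM', hyM', hxnot⟩ :=
        key_lemma M hM a B' B α hB'M hBM hB'B hAB' hAB hαα h2 h1 hyM hxM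
      have htS : ({x, y} : Set (EuclideanSpace ℝ (Fin 8))) ∈
          {s : Set (EuclideanSpace ℝ (Fin 8)) | ∃ B B', B ≠ B' ∧ s = {B, B'} ∧
            B ∈ V221 ∧ B' ∈ V221 ∧ (inner ℝ (enc a) B : ℝ) = 0 ∧ (inner ℝ (enc a) B' : ℝ) = 0 ∧
            (inner ℝ B B' : ℝ) = 0 ∧ B ∈ M ∧ B' ∈ M} :=
        ⟨x, y, hxny, rfl, hxV, hyV, hAx, hAy, hxyi, hxM', hyM'⟩
      rw [hs] at htS
      have : x ∈ ({B', B} : Set (EuclideanSpace ℝ (Fin 8))) := by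
        rw [Set.pair_comm B' B, ← hseq, ← htS]; exact Set.mem_insert x {y}
      exact hxnot this
  · -- (b) → (a)
    intro hb u huM v hvM hne
    obtain ⟨p, rfl⟩ := (V221_eq ▸ hM huM : u ∈ Set.range enc)
    obtain ⟨q, rfl⟩ := (V221_eq ▸ hM hvM : v ∈ Set.range enc)
    have hpq : p ≠ q := fun h => hne (by rw [h])
    rcases D1a p q with h0 | h4 | h8
    · -- non-adjacent case
      obtain ⟨a, hap', haq'⟩ := D4 p q h0
      have hap : gram a p = 0 := (Dsym a p).trans hap'
      have haq : gram a q = 0 := (Dsym a q).trans haq'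
      have hS := hb (enc a) (mem_V221_enc a)
      set S := {s : Set (EuclideanSpace ℝ (Fin 8)) | ∃ B B', B ≠ B' ∧ s = {B, B'} ∧
        B ∈ V221 ∧ B' ∈ V221 ∧ (inner ℝ (enc a) B : ℝ) = 0 ∧ (inner ℝ (enc a) B' : ℝ) = 0 ∧
        (inner ℝ B B' : ℝ) = 0 ∧ B ∈ M ∧ B' ∈ M} with hSdef
      have hiap : (inner ℝ (enc a) (enc p) : ℝ) = 0 := by rw [inner_enc, hap]; norm_num
      have hiaq : (inner ℝ (enc a) (enc q) : ℝ) = 0 := by rw [inner_enc, haq]; norm_num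
      have hipq : (inner ℝ (enc p) (enc q) : ℝ) = 0 := by rw [inner_enc, h0]; norm_num
      have hs₀ : ({enc p, enc q} : Set (EuclideanSpace ℝ (Fin 8))) ∈ S :=
        ⟨enc p, enc q, hne, rfl, mem_V221_enc p, mem_V221_enc q, hiap, hiaq, hipq, huM, hvM⟩
      have hex : ∃ t ∈ S, t ≠ ({enc p, enc q} : Set (EuclideanSpace ℝ (Fin 8))) := by
        by_contra hcon
        push_neg at hcon
        apply hS
        rw [Set.eq_singleton_iff_unique_mem.mpr ⟨hs₀, hcon⟩]
        exact Set.ncard_singleton _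
      obtain ⟨t, htS, hts⟩ := hex
      obtain ⟨x, y, hxy, rfl, hxV, hyV, hiax, hiay, hixy, hxM, hyM⟩ := htS
      obtain ⟨px, rfl⟩ := (V221_eq ▸ hxV : x ∈ Set.range enc)
      obtain ⟨py, rfl⟩ := (V221_eq ▸ hyV : y ∈ Set.range enc)
      have gax : gram a px = 0 := by rw [inner_enc] at hiax; exact_mod_cast hiax
      have gay : gram a py = 0 := by rw [inner_enc] at hiay; exact_mod_cast hiay
      have gxy : gram px py = 0 := by rw [inner_enc] at hixy; exact_mod_cast hixy
      have gqp : gram q p = 0 := (Dsym q p).trans h0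
      have henc_inj : ∀ {r r' : I27}, enc r = enc r' → r = r' := by
        intro r r' h
        apply D1c
        have := inner_enc r r'
        rw [h, inner_enc] at this
        have h2 : gram r r' = gram r' r' := by exact_mod_cast this.symm
        rw [h2]; exact D1b r'
      -- px, py distinct from p, q
      have hne1 : px ≠ p := by
        intro h; rw [h] at gax gxy
        have : py = q := D5 a p gax q haq h0 py gay gxy
        exact hts (by rw [h, this])
      have hne2 : px ≠ q := by
        intro h; rw [h] at gax gxy
        have : py = p := D5 a q gax p hap gqp py gay gxy
        exact hts (by rw [h, this]; exact Set.pair_comm _ _)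
      have hne3 : py ≠ p := by
        intro h; rw [h] at gay gxy
        have : px = q := D5 a p gay q haq h0 px gax ((Dsym p px).trans gxy)
        exact hts (by rw [h, this]; exact Set.pair_comm _ _)
      have hne4 : py ≠ q := by
        intro h; rw [h] at gay gxy
        have : px = p := D5 a q gay p hap gqp px gax ((Dsym q px).trans gxy)
        exact hts (by rw [h, this])
      -- cross grams are 4
      have gppx : gram p px = 4 := by
        rcases D1a p px with h | h | h
        · exact absurd (D5 a p hap q haq h0 px gax h) hne2
        · exact h
        · exact absurd (D1c p px h).symm hne1
      have gqpx : gram q px = 4 := by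
        rcases D1a q px with h | h | h
        · exact absurd (D5 a q haq p hap gqp px gax h) hne1
        · exact h
        · exact absurd (D1c q px h).symm hne2
      have gppy : gram p py = 4 := by
        rcases D1a p py with h | h | h
        · exact absurd (D5 a p hap q haq h0 py gay h) hne4
        · exact h
        · exact absurd (D1c p py h).symm hne3
      have gqpy : gram q py = 4 := by
        rcases D1a q py with h | h | h
        · exact absurd (D5 a q haq p hap gqp py gay h) hne3
        · exact h
        · exact absurd (D1c q py h).symm hne4
      -- the root
      set α := (1 / 2 : ℝ) • (enc p - enc px) with hαdef
      have hαΦ : α ∈ PhiE6 := root_of_adj gppx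
      have hαα : (inner ℝ α α : ℝ) = 2 := by
        rw [hαdef, real_inner_smul_left, real_inner_smul_right, inner_sub_left,
          inner_sub_right, inner_sub_right, inner_enc, inner_enc, inner_enc, inner_enc,
          D1b p, D1b px, gppx, (Dsym px p).trans gppx]
        norm_num
      have huα : (inner ℝ (enc p) α : ℝ) = 2 := by
        rw [hαdef, real_inner_smul_right, inner_sub_right, inner_enc, inner_enc, D1b p, gppx]
        norm_num
      have hvα : (inner ℝ (enc q) α : ℝ) = -2 := by
        rw [hαdef, real_inner_smul_right, inner_sub_right, inner_enc, inner_enc, gqp, gqpx]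
        norm_num
      -- u + v = x + y
      have hquad : enc p + enc q = enc px + enc py := by
        have hw : (inner ℝ (enc p + enc q - (enc px + enc py))
            (enc p + enc q - (enc px + enc py)) : ℝ) = 0 := by
          simp only [inner_sub_left, inner_sub_right, inner_add_left, inner_add_right,
            inner_enc, D1b, h0, gqp, gxy, (Dsym py px).trans gxy, gppx, gppy, gqpx, gqpy,
            (Dsym px p).trans gppx, (Dsym py p).trans gppy, (Dsym px q).trans gqpx,
            (Dsym py q).trans gqpy]
          norm_num
        have := inner_self_eq_zero.mp hw
        rw [sub_eq_zero] at this
        exact this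
      have hrefl_u : reflVec α (enc p) = enc px := by
        rw [refl_plus hαα huα, hαdef]
        module
      have hrefl_v : reflVec α (enc q) = enc py := by
        rw [refl_minus hαα hvα, hαdef]
        have hy2 : enc py = enc p + enc q - enc px := by rw [hquad]; abel
        rw [hy2]
        module
      refine ⟨α, hαΦ, ?_, ?_, ?_⟩
      · rw [huα, hvα]; norm_num
      · rw [hrefl_u]; exact hxM
      · rw [hrefl_v]; exact hyM
    · -- adjacent case
      set α := (1 / 2 : ℝ) • (enc p - enc q) with hαdef
      have hαΦ : α ∈ PhiE6 := root_of_adj h4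
      have gqp : gram q p = 4 := (Dsym q p).trans h4
      have hαα : (inner ℝ α α : ℝ) = 2 := by
        rw [hαdef, real_inner_smul_left, real_inner_smul_right, inner_sub_left,
          inner_sub_right, inner_sub_right, inner_enc, inner_enc, inner_enc, inner_enc,
          D1b p, D1b q, h4, gqp]
        norm_num
      have huα : (inner ℝ (enc p) α : ℝ) = 2 := by
        rw [hαdef, real_inner_smul_right, inner_sub_right, inner_enc, inner_enc, D1b p, h4]
        norm_num
      have hvα : (inner ℝ (enc q) α : ℝ) = -2 := by
        rw [hαdef, real_inner_smul_right, inner_sub_right, inner_enc, inner_enc, gqp, D1b q]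
        norm_num
      have hrefl_u : reflVec α (enc p) = enc q := by
        rw [refl_plus hαα huα, hαdef]
        module
      have hrefl_v : reflVec α (enc q) = enc p := by
        rw [refl_minus hαα hvα, hαdef]
        module
      refine ⟨α, hαΦ, ?_, ?_, ?_⟩
      · rw [huα, hvα]; norm_num
      · rw [hrefl_u]; exact hvM
      · rw [hrefl_v]; exact huM
    · exact absurd (D1c p q h8) hpq
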